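/- The volume of the regular ideal tetrahedron satisfies the numerical bounds 1.0149 < 3Λ(π/3) < 1.0150. -/

import Mathlib

/-!
`Λ` is antitone on `[π/6, 5π/6]`, where `log |2 sin t| ≥ 0`, so `Λ(π/3)` lies between
`Λ(1.0472)` and `Λ(1.04719)`. For `0 < a < π` one has
`Λ(a) = a - a log (2a) - ∫₀^a log (sinc t) dt`, and on `[0, 21/20]` the function `log (sinc t)`
lies between its Taylor polynomial `-t²/6 - t⁴/180 - t⁶/2835` and that polynomial minus
`t⁸/20000`. To see this, write `sinc t = 1 - w`, bound `w` by partial sums of the alternating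
sine series and `log (1 - w)` by partial sums of `-∑ wᵏ/k`; the resulting polynomial
inequalities follow from `t² ≤ 441/400` by comparing coefficients.
-/

open MeasureTheory Real

/-- The Lobachevsky function `Λ(θ) = -∫₀^θ log |2 sin t| dt`. -/
noncomputable def lobachevsky (θ : ℝ) : ℝ :=
  -∫ t in (0:ℝ)..θ, Real.log |2 * Real.sin t|

open Set Filter Topology
open scoped Nat

lemma antitone_sin_series_term {t : ℝ} (ht0 : 0 ≤ t) (ht : t ^ 2 ≤ 6) :
    Antitone fun i : ℕ => t ^ (2 * i + 1) / (2 * i + 1)! := by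
  refine antitone_nat_of_succ_le fun i => ?_
  have hfact : ((2 * (i + 1) + 1)! : ℝ) = (2 * i + 2) * (2 * i + 3) * (2 * i + 1)! := by
    rw [show 2 * (i + 1) + 1 = (2 * i + 1) + 1 + 1 by ring, Nat.factorial_succ, Nat.factorial_succ]
    push_cast; ring
  have hsq : t ^ 2 ≤ (2 * i + 2) * (2 * i + 3) := by nlinarith
  rw [hfact, show 2 * (i + 1) + 1 = 2 * i + 1 + 2 by ring, pow_add, mul_comm (t ^ (2 * i + 1))]
  calc t ^ 2 * t ^ (2 * i + 1) / ((2 * i + 2) * (2 * i + 3) * (2 * i + 1)!)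
      = t ^ 2 / ((2 * i + 2) * (2 * i + 3)) * (t ^ (2 * i + 1) / (2 * i + 1)!) :=
        mul_div_mul_comm _ _ _ _
    _ ≤ 1 * (t ^ (2 * i + 1) / (2 * i + 1)!) := by
      gcongr; exact div_le_one_of_le₀ hsq (by positivity)
    _ = t ^ (2 * i + 1) / (2 * i + 1)! := one_mul _

lemma tendsto_sum_range_sin_series (t : ℝ) :
    Tendsto (fun n => ∑ i ∈ Finset.range n, (-1) ^ i * (t ^ (2 * i + 1) / (2 * i + 1)!)) atTop
      (𝓝 (sin t)) := by
  simpa only [mul_div_assoc] using (Real.hasSum_sin t).tendsto_sum_nat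

lemma sum_range_even_le_sin {t : ℝ} (ht0 : 0 ≤ t) (ht : t ^ 2 ≤ 6) (k : ℕ) :
    ∑ i ∈ Finset.range (2 * k), (-1) ^ i * (t ^ (2 * i + 1) / (2 * i + 1)!) ≤ sin t :=
  (antitone_sin_series_term ht0 ht).alternating_series_le_tendsto (tendsto_sum_range_sin_series t) k

lemma sin_le_sum_range_odd {t : ℝ} (ht0 : 0 ≤ t) (ht : t ^ 2 ≤ 6) (k : ℕ) :
    sin t ≤ ∑ i ∈ Finset.range (2 * k + 1), (-1) ^ i * (t ^ (2 * i + 1) / (2 * i + 1)!) :=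
  (antitone_sin_series_term ht0 ht).tendsto_le_alternating_series (tendsto_sum_range_sin_series t) k

lemma log_one_sub_le_neg_sum_range {w : ℝ} (hw0 : 0 ≤ w) (hw1 : w < 1) (n : ℕ) :
    log (1 - w) ≤ -∑ i ∈ Finset.range n, w ^ (i + 1) / (i + 1) := by
  have hsum := hasSum_pow_div_log_of_abs_lt_one (by rwa [abs_of_nonneg hw0])
  have := sum_le_hasSum (Finset.range n) (fun i _ => by positivity) hsum
  linarith

lemma neg_sum_range_sub_le_log_one_sub {w : ℝ} (hw0 : 0 ≤ w) (hw1 : w < 1) (n : ℕ) :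
    -∑ i ∈ Finset.range n, w ^ (i + 1) / (i + 1) - w ^ (n + 1) / ((n + 1) * (1 - w)) ≤
      log (1 - w) := by
  have hsum := hasSum_pow_div_log_of_abs_lt_one (by rwa [abs_of_nonneg hw0])
  have htail := (hasSum_nat_add_iff' n).mpr hsum
  have hgeom := (hasSum_geometric_of_lt_one hw0 hw1).mul_left (w ^ (n + 1) / (n + 1))
  have hle := hasSum_le (fun i => ?_) htail hgeom
  · have h1w : 1 - w ≠ 0 := (sub_pos.2 hw1).ne'
    have : w ^ (n + 1) / ((n + 1) * (1 - w)) = w ^ (n + 1) / (n + 1) * (1 - w)⁻¹ := by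
      field_simp
    linarith
  · rw [show i + n + 1 = (n + 1) + i by ring, pow_add, div_mul_eq_mul_div]
    gcongr
    linarith

lemma pow_add_le_pow_mul_pow {u b : ℝ} (hu : 0 ≤ u) (hub : u ≤ b) (m j : ℕ) :
    u ^ (m + j) ≤ b ^ j * u ^ m := by
  rw [pow_add, mul_comm]
  gcongr

/- In `u = t²` the two sides of each of the next two inequalities agree up to `u³`; every `uᵏ`
with `k > 4` is absorbed through `uᵏ ≤ (441/400)^(k-4) u⁴`, and what is left of the `u⁴`
coefficient still has the right sign. -/
lemma neg_sum_range_log_series_le {t : ℝ} (ht0 : 0 ≤ t) (ht : t ≤ 21 / 20) :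
    -∑ i ∈ Finset.range 4,
        (t ^ 2 / 6 - t ^ 4 / 120 + t ^ 6 / 5040 - t ^ 8 / 362880) ^ (i + 1) / (i + 1) ≤
      -t ^ 2 / 6 - t ^ 4 / 180 - t ^ 6 / 2835 := by
  have hu : 0 ≤ t ^ 2 := by positivity
  have hub : t ^ 2 ≤ 441 / 400 := by nlinarith
  have h := pow_add_le_pow_mul_pow hu hub 4
  have h0 := fun k => pow_nonneg hu k
  simp only [Finset.sum_range_succ, Finset.sum_range_zero]
  norm_num
  linarith [h 1, h 2, h 3, h 4, h 5, h 6, h 7, h 8, h 9, h 10, h 11, h 12,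
    h0 4, h0 5, h0 6, h0 7, h0 8, h0 9, h0 10, h0 11, h0 12, h0 13, h0 14, h0 15, h0 16]

lemma le_neg_sum_range_log_series {t : ℝ} (ht0 : 0 ≤ t) (ht : t ≤ 21 / 20) :
    -t ^ 2 / 6 - t ^ 4 / 180 - t ^ 6 / 2835 - t ^ 8 / 20000 ≤
      -∑ i ∈ Finset.range 4, (t ^ 2 / 6 - t ^ 4 / 120 + t ^ 6 / 5040) ^ (i + 1) / (i + 1) -
        (t ^ 2 / 6 - t ^ 4 / 120 + t ^ 6 / 5040) ^ 5 / 4 := by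
  have hu : 0 ≤ t ^ 2 := by positivity
  have hub : t ^ 2 ≤ 441 / 400 := by nlinarith
  have h := pow_add_le_pow_mul_pow hu hub 4
  have h0 := fun k => pow_nonneg hu k
  simp only [Finset.sum_range_succ, Finset.sum_range_zero]
  norm_num
  linarith [h 1, h 2, h 3, h 4, h 5, h 6, h 7, h 8, h 9, h 10, h 11,
    h0 4, h0 5, h0 6, h0 7, h0 8, h0 9, h0 10, h0 11, h0 12, h0 13, h0 14, h0 15]

lemma log_sinc_le {t : ℝ} (ht0 : 0 ≤ t) (ht : t ≤ 21 / 20) :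
    log (sinc t) ≤ -t ^ 2 / 6 - t ^ 4 / 180 - t ^ 6 / 2835 := by
  rcases ht0.eq_or_lt with rfl | htpos
  · simp
  set w := 1 - sin t / t with hw
  set wL := t ^ 2 / 6 - t ^ 4 / 120 + t ^ 6 / 5040 - t ^ 8 / 362880 with hwL_def
  have hu : 0 ≤ t ^ 2 := by positivity
  have hub : t ^ 2 ≤ 441 / 400 := by nlinarith
  have hsin := sin_le_sum_range_odd ht0 (by nlinarith) 2
  norm_num [Finset.sum_range_succ, Nat.factorial] at hsin
  have hwL : wL ≤ w := by
    have : sin t / t ≤ 1 - wL := by rw [div_le_iff₀ htpos, hwL_def]; linarith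
    linarith
  have hwL0 : 0 ≤ wL := by
    have h := pow_add_le_pow_mul_pow hu hub 1
    linarith [h 1, h 3, pow_nonneg hu 3]
  have hw1 : w < 1 := by
    have := sin_pos_of_pos_of_lt_pi htpos (by linarith [pi_gt_three])
    have : 0 < sin t / t := by positivity
    linarith
  calc log (sinc t) = log (1 - w) := by rw [sinc_of_ne_zero htpos.ne', hw, sub_sub_cancel]
    _ ≤ -∑ i ∈ Finset.range 4, w ^ (i + 1) / (i + 1) :=
      log_one_sub_le_neg_sum_range (hwL0.trans hwL) hw1 4
    _ ≤ -∑ i ∈ Finset.range 4, wL ^ (i + 1) / (i + 1) := by gcongr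
    _ ≤ -t ^ 2 / 6 - t ^ 4 / 180 - t ^ 6 / 2835 := neg_sum_range_log_series_le ht0 ht

lemma le_log_sinc {t : ℝ} (ht0 : 0 ≤ t) (ht : t ≤ 21 / 20) :
    -t ^ 2 / 6 - t ^ 4 / 180 - t ^ 6 / 2835 - t ^ 8 / 20000 ≤ log (sinc t) := by
  rcases ht0.eq_or_lt with rfl | htpos
  · simp
  set w := 1 - sin t / t with hw
  set wU := t ^ 2 / 6 - t ^ 4 / 120 + t ^ 6 / 5040 with hwU_def
  have hu : 0 ≤ t ^ 2 := by positivity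
  have hub : t ^ 2 ≤ 441 / 400 := by nlinarith
  have hsin := sum_range_even_le_sin ht0 (by nlinarith) 2
  norm_num [Finset.sum_range_succ, Nat.factorial] at hsin
  have hwU : w ≤ wU := by
    have : 1 - wU ≤ sin t / t := by rw [le_div_iff₀ htpos, hwU_def]; linarith
    linarith
  have hw0 : 0 ≤ w := by
    have : sin t / t ≤ 1 := by rw [div_le_one htpos]; exact sin_le ht0
    linarith
  have hwU5 : wU ≤ 1 / 5 := by
    linarith [pow_le_pow_left₀ hu hub 3, pow_nonneg hu 2]
  calc -t ^ 2 / 6 - t ^ 4 / 180 - t ^ 6 / 2835 - t ^ 8 / 20000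
      ≤ -∑ i ∈ Finset.range 4, wU ^ (i + 1) / (i + 1) - wU ^ 5 / 4 :=
        le_neg_sum_range_log_series ht0 ht
    _ ≤ -∑ i ∈ Finset.range 4, wU ^ (i + 1) / (i + 1) - wU ^ 5 / ((4 + 1) * (1 - wU)) := by
      gcongr
      · exact pow_nonneg (hw0.trans hwU) 5
      · linarith
    _ ≤ -∑ i ∈ Finset.range 4, w ^ (i + 1) / (i + 1) - w ^ (4 + 1) / ((4 + 1) * (1 - w)) := by
      gcongr
      · exact pow_nonneg (hw0.trans hwU) 5
      · linarith
    _ ≤ log (1 - w) := neg_sum_range_sub_le_log_one_sub hw0 (by linarith) 4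
    _ = log (sinc t) := by rw [sinc_of_ne_zero htpos.ne', hw, sub_sub_cancel]

lemma sinc_pos {t : ℝ} (ht0 : 0 ≤ t) (ht : t < π) : 0 < sinc t := by
  rcases ht0.eq_or_lt with rfl | htpos
  · simp
  rw [sinc_of_ne_zero htpos.ne']
  exact div_pos (sin_pos_of_pos_of_lt_pi htpos ht) htpos

lemma intervalIntegrable_log_sinc {a : ℝ} (ha0 : 0 ≤ a) (ha : a < π) :
    IntervalIntegrable (fun t => log (sinc t)) volume 0 a := by
  refine (continuous_sinc.continuousOn.log fun t ht => (sinc_pos ?_ ?_).ne').intervalIntegrable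
  all_goals rw [uIcc_of_le ha0] at ht
  · exact ht.1
  · exact ht.2.trans_lt ha

lemma integral_log_sinc_le {a : ℝ} (ha0 : 0 ≤ a) (ha : a ≤ 21 / 20) :
    ∫ t in (0:ℝ)..a, log (sinc t) ≤ -a ^ 3 / 18 - a ^ 5 / 900 - a ^ 7 / 19845 := by
  calc ∫ t in (0:ℝ)..a, log (sinc t)
      ≤ ∫ t in (0:ℝ)..a, (-t ^ 2 / 6 - t ^ 4 / 180 - t ^ 6 / 2835) :=
        intervalIntegral.integral_mono_on ha0
          (intervalIntegrable_log_sinc ha0 (by linarith [pi_gt_three]))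
          (Continuous.intervalIntegrable (by fun_prop) _ _)
          fun t ht => log_sinc_le ht.1 (ht.2.trans ha)
    _ = -a ^ 3 / 18 - a ^ 5 / 900 - a ^ 7 / 19845 := by
      simp (disch := apply Continuous.intervalIntegrable; fun_prop) only
        [intervalIntegral.integral_sub, intervalIntegral.integral_div,
          intervalIntegral.integral_neg, integral_pow]
      ring

lemma le_integral_log_sinc {a : ℝ} (ha0 : 0 ≤ a) (ha : a ≤ 21 / 20) :
    -a ^ 3 / 18 - a ^ 5 / 900 - a ^ 7 / 19845 - a ^ 9 / 180000 ≤
      ∫ t in (0:ℝ)..a, log (sinc t) := by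
  calc -a ^ 3 / 18 - a ^ 5 / 900 - a ^ 7 / 19845 - a ^ 9 / 180000
      = ∫ t in (0:ℝ)..a, (-t ^ 2 / 6 - t ^ 4 / 180 - t ^ 6 / 2835 - t ^ 8 / 20000) := by
        simp (disch := apply Continuous.intervalIntegrable; fun_prop) only
          [intervalIntegral.integral_sub, intervalIntegral.integral_div,
            intervalIntegral.integral_neg, integral_pow]
        ring
    _ ≤ ∫ t in (0:ℝ)..a, log (sinc t) :=
        intervalIntegral.integral_mono_on ha0 (Continuous.intervalIntegrable (by fun_prop) _ _)
          (intervalIntegrable_log_sinc ha0 (by linarith [pi_gt_three]))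
          fun t ht => le_log_sinc ht.1 (ht.2.trans ha)

lemma intervalIntegrable_log_abs_two_mul_sin (a b : ℝ) :
    IntervalIntegrable (fun t => log |2 * sin t|) volume a b :=
  (analyticOnNhd_const.mul analyticOnNhd_sin).meromorphicOn.intervalIntegrable_log_norm

lemma one_half_le_sin {t : ℝ} (ht : t ∈ Icc (π / 6) (5 * π / 6)) : 1 / 2 ≤ sin t := by
  have h := strictConcaveOn_sin_Icc.concaveOn.min_le_of_mem_Icc
    (x := π / 6) (y := 5 * π / 6) ⟨by positivity, by linarith [pi_pos]⟩
    ⟨by positivity, by linarith [pi_pos]⟩ ht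
  rwa [show 5 * π / 6 = π - π / 6 by ring, sin_pi_sub, min_self, sin_pi_div_six] at h

lemma lobachevsky_antitoneOn : AntitoneOn lobachevsky (Icc (π / 6) (5 * π / 6)) := by
  intro x hx y hy hxy
  have hdiff : lobachevsky x - lobachevsky y = ∫ t in x..y, log |2 * sin t| := by
    rw [lobachevsky, lobachevsky, neg_sub_neg, intervalIntegral.integral_interval_sub_left
      (intervalIntegrable_log_abs_two_mul_sin _ _) (intervalIntegrable_log_abs_two_mul_sin _ _)]
  have hnonneg : 0 ≤ ∫ t in x..y, log |2 * sin t| := by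
    refine intervalIntegral.integral_nonneg hxy fun t ht => log_nonneg ?_
    have := one_half_le_sin ⟨hx.1.trans ht.1, ht.2.trans hy.2⟩
    rw [abs_of_pos (by linarith)]
    linarith
  linarith

lemma lobachevsky_eq_sub_integral_log_sinc {a : ℝ} (ha0 : 0 < a) (ha : a < π) :
    lobachevsky a = a - a * log (2 * a) - ∫ t in (0:ℝ)..a, log (sinc t) := by
  have hsplit : ∫ t in (0:ℝ)..a, log |2 * sin t| =
      ∫ t in (0:ℝ)..a, (log 2 + log t + log (sinc t)) := by
    refine intervalIntegral.integral_congr_ae (ae_of_all _ fun t ht => ?_)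
    rw [uIoc_of_le ha0.le] at ht
    have hsin := sin_pos_of_pos_of_lt_pi ht.1 (ht.2.trans_lt ha)
    rw [sinc_of_ne_zero ht.1.ne', abs_of_pos (by positivity), log_mul two_ne_zero hsin.ne',
      log_div hsin.ne' ht.1.ne']
    ring
  have hlog := intervalIntegral.intervalIntegrable_log' (a := 0) (b := a)
  rw [lobachevsky, hsplit, intervalIntegral.integral_add (intervalIntegrable_const.add hlog)
      (intervalIntegrable_log_sinc ha0.le ha), intervalIntegral.integral_add intervalIntegrable_const hlog,
    intervalIntegral.integral_const, integral_log_from_zero, log_mul two_ne_zero ha0.ne']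
  simp only [sub_zero, smul_eq_mul]
  ring

lemma lobachevsky_le {a : ℝ} (ha0 : 0 < a) (ha : a ≤ 21 / 20) :
    lobachevsky a ≤
      a - a * log (2 * a) + a ^ 3 / 18 + a ^ 5 / 900 + a ^ 7 / 19845 + a ^ 9 / 180000 := by
  rw [lobachevsky_eq_sub_integral_log_sinc ha0 (by linarith [pi_gt_three])]
  linarith [le_integral_log_sinc ha0.le ha]

lemma le_lobachevsky {a : ℝ} (ha0 : 0 < a) (ha : a ≤ 21 / 20) :
    a - a * log (2 * a) + a ^ 3 / 18 + a ^ 5 / 900 + a ^ 7 / 19845 ≤ lobachevsky a := by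
  rw [lobachevsky_eq_sub_integral_log_sinc ha0 (by linarith [pi_gt_three])]
  linarith [integral_log_sinc_le ha0.le ha]

lemma log_1_04719_gt : 0.04611 < log 1.04719 := by
  have h := sum_range_le_log_div (x := 4719 / 204719) (by norm_num) (by norm_num) 2
  rw [show (1 + 4719 / 204719 : ℝ) / (1 - 4719 / 204719) = 1.04719 by norm_num] at h
  norm_num [Finset.sum_range_succ] at h
  linarith

lemma log_1_0472_lt : log 1.0472 < 0.04612 := by
  have h := log_div_le_sum_range_add (x := 59 / 2559) (by norm_num) (by norm_num) 2
  rw [show (1 + 59 / 2559 : ℝ) / (1 - 59 / 2559) = 1.0472 by norm_num] at h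
  norm_num [Finset.sum_range_succ] at h
  linarith

/-- Numerical bounds for the volume of the regular ideal tetrahedron. -/
theorem regular_ideal_tetrahedron_volume_bounds :
    1.0149 < 3 * lobachevsky (Real.pi / 3) ∧
      3 * lobachevsky (Real.pi / 3) < 1.0150 := by
  have hlo : (1.04719 : ℝ) ≤ π / 3 := by linarith [pi_gt_d6]
  have hhi : π / 3 ≤ (1.0472 : ℝ) := by linarith [pi_lt_d4]
  have hmem : ∀ x : ℝ, 1.04719 ≤ x → x ≤ 1.0472 → x ∈ Icc (π / 6) (5 * π / 6) :=
    fun x h₁ h₂ => ⟨by linarith [pi_lt_d4], by linarith [pi_gt_d6]⟩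
  have hΛ₁ : lobachevsky (π / 3) ≤ lobachevsky 1.04719 :=
    lobachevsky_antitoneOn (hmem _ le_rfl (by norm_num)) (hmem _ hlo hhi) hlo
  have hΛ₂ : lobachevsky 1.0472 ≤ lobachevsky (π / 3) :=
    lobachevsky_antitoneOn (hmem _ hlo hhi) (hmem _ (by norm_num) le_rfl) hhi
  have h₁ := lobachevsky_le (a := 1.04719) (by norm_num) (by norm_num)
  have h₂ := le_lobachevsky (a := 1.0472) (by norm_num) (by norm_num)
  rw [log_mul two_ne_zero (by norm_num)] at h₁ h₂
  constructor
  · linarith [log_two_lt_d9, log_1_0472_lt]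
  · linarith [log_two_gt_d9, log_1_04719_gt]
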